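/- arXiv:2305.14939 — 3 statements merged into one kernel-verified Lean document; each statement's English description precedes it below -/
import Mathlib

section
/- Let a, b ∈ ℝ_{++}ⁿ be strictly positive probability vectors, C ∈ ℝ₊^{n×n}, γ > 0, K := exp(−C/γ), and let (f*, g*) be any dual optimal solution (i.e. diag(e^{f*/γ}) K diag(e^{g*/γ}) has row sums a and column sums b). Let (f, g) ∈ ℝⁿ×ℝⁿ and let (f', g') be obtained from (f, g) by a single coordinate update: either g' = g and f'_I = γ log a_I − γ log(K e^{g/γ})_I for some index I with f'_i = f_i for i ≠ I, or f' = f and g'_J = γ log b_J − γ log(Kᵀ e^{f/γ})_J for some index J with g'_j = g_j for j ≠ J. Then max(‖f' − f*‖_∞, ‖g' − g*‖_∞) ≤ max(‖f − f*‖_∞, ‖g − g*‖_∞). -/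
/-- The dual entropic OT objective
`h(f,g) = ⟨f,a⟩ + ⟨g,b⟩ − γ Σ_{i,j} exp((f_i + g_j − C_{ij})/γ)`. -/
noncomputable def dualObj {n : ℕ} (a b : Fin n → ℝ) (C : Matrix (Fin n) (Fin n) ℝ)
    (γ : ℝ) (f g : Fin n → ℝ) : ℝ :=
  (∑ i, f i * a i) + (∑ j, g j * b j) -
    γ * ∑ i, ∑ j, Real.exp ((f i + g j - C i j) / γ)

/-- The transport plan `P = diag(e^{f/γ}) K diag(e^{g/γ})` with `K = exp(−C/γ)`. -/
noncomputable def plan {n : ℕ} (C : Matrix (Fin n) (Fin n) ℝ) (γ : ℝ)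
    (f g : Fin n → ℝ) : Matrix (Fin n) (Fin n) ℝ :=
  fun i j => Real.exp (f i / γ) * Real.exp (-C i j / γ) * Real.exp (g j / γ)

/-- The scalar Bregman divergence `ρ(x,y) = y − x + x log(x/y)`. -/
noncomputable def rho (x y : ℝ) : ℝ := y - x + x * Real.log (x / y)

/-!
At an optimum `(f*, g*)` the row marginal condition reads
`γ log a_I = f*_I + γ log Σ_j K_{Ij} e^{g*_j/γ}`, so the updated coordinate satisfies
`f'_I − f*_I = γ log Σ_j K_{Ij} e^{g*_j/γ} − γ log Σ_j K_{Ij} e^{g_j/γ}`.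
The map `u ↦ γ log Σ_j w_j e^{u_j/γ}` with positive weights is monotone and commutes with
adding constants, hence is 1-Lipschitz for the sup-norm; so `|f'_I − f*_I| ≤ ‖g − g*‖_∞`,
while every other coordinate is unchanged. The column update is symmetric.
-/

open Real Function

lemma plan_row_sum {n : ℕ} (C : Matrix (Fin n) (Fin n) ℝ) (γ : ℝ) (f g : Fin n → ℝ)
    (i : Fin n) :
    ∑ j, plan C γ f g i j = exp (f i / γ) * ∑ j, exp (-C i j / γ) * exp (g j / γ) := by
  simp only [plan, Finset.mul_sum, mul_assoc]

lemma plan_col_sum {n : ℕ} (C : Matrix (Fin n) (Fin n) ℝ) (γ : ℝ) (f g : Fin n → ℝ)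
    (j : Fin n) :
    ∑ i, plan C γ f g i j = exp (g j / γ) * ∑ i, exp (-C i j / γ) * exp (f i / γ) := by
  simp only [plan, Finset.mul_sum]
  exact Finset.sum_congr rfl fun i _ => by ring

section LogSumExp

variable {ι : Type*} [Fintype ι] {γ M : ℝ} {w u v : ι → ℝ}

lemma sum_mul_exp_div_pos [Nonempty ι] (hw : ∀ j, 0 < w j) (x : ι → ℝ) :
    0 < ∑ j, w j * exp (x j / γ) :=
  Finset.sum_pos (fun j _ => mul_pos (hw j) (exp_pos _)) Finset.univ_nonempty

lemma sum_mul_exp_div_le_exp_mul_sum (hγ : 0 < γ) (hw : ∀ j, 0 ≤ w j)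
    (h : ∀ j, u j ≤ v j + M) :
    ∑ j, w j * exp (u j / γ) ≤ exp (M / γ) * ∑ j, w j * exp (v j / γ) := by
  rw [Finset.mul_sum]
  refine Finset.sum_le_sum fun j _ => ?_
  rw [mul_left_comm, ← exp_add, ← add_div, add_comm M]
  exact mul_le_mul_of_nonneg_left
    (exp_le_exp.2 (div_le_div_of_nonneg_right (h j) hγ.le)) (hw j)

lemma mul_log_sum_mul_exp_div_le [Nonempty ι] (hγ : 0 < γ) (hw : ∀ j, 0 < w j)
    (h : ∀ j, u j ≤ v j + M) :
    γ * log (∑ j, w j * exp (u j / γ)) ≤ γ * log (∑ j, w j * exp (v j / γ)) + M := by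
  have hlog : log (∑ j, w j * exp (u j / γ)) ≤ M / γ + log (∑ j, w j * exp (v j / γ)) := by
    calc log (∑ j, w j * exp (u j / γ))
        ≤ log (exp (M / γ) * ∑ j, w j * exp (v j / γ)) :=
          log_le_log (sum_mul_exp_div_pos hw u)
            (sum_mul_exp_div_le_exp_mul_sum hγ (fun j => (hw j).le) h)
      _ = M / γ + log (∑ j, w j * exp (v j / γ)) := by
          rw [log_mul (exp_ne_zero _) (sum_mul_exp_div_pos hw v).ne', log_exp]
  calc γ * log (∑ j, w j * exp (u j / γ))
      ≤ γ * (M / γ + log (∑ j, w j * exp (v j / γ))) := by gcongr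
    _ = γ * log (∑ j, w j * exp (v j / γ)) + M := by field_simp; ring

lemma abs_mul_log_sum_mul_exp_div_sub_le [Nonempty ι] (hγ : 0 < γ) (hw : ∀ j, 0 < w j)
    (h : ∀ j, |u j - v j| ≤ M) :
    |γ * log (∑ j, w j * exp (u j / γ)) - γ * log (∑ j, w j * exp (v j / γ))| ≤ M := by
  have huv : ∀ j, u j ≤ v j + M := fun j => by linarith [(abs_le.mp (h j)).2]
  have hvu : ∀ j, v j ≤ u j + M := fun j => by linarith [(abs_le.mp (h j)).1]
  rw [abs_sub_le_iff]
  constructor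
  · linarith [mul_log_sum_mul_exp_div_le hγ hw huv]
  · linarith [mul_log_sum_mul_exp_div_le hγ hw hvu]

lemma abs_sinkhorn_update_sub_le [Nonempty ι] (hγ : 0 < γ) (hw : ∀ j, 0 < w j)
    (h : ∀ j, |u j - v j| ≤ M) {m t : ℝ}
    (hm : m = exp (t / γ) * ∑ j, w j * exp (v j / γ)) :
    |γ * log m - γ * log (∑ j, w j * exp (u j / γ)) - t| ≤ M := by
  have hlog : γ * log m = t + γ * log (∑ j, w j * exp (v j / γ)) := by
    rw [hm, log_mul (exp_ne_zero _) (sum_mul_exp_div_pos hw v).ne', log_exp, mul_add,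
      mul_div_cancel₀ _ hγ.ne']
  rw [hlog, abs_sub_comm]
  convert abs_mul_log_sum_mul_exp_div_sub_le hγ hw h using 2
  ring

end LogSumExp

lemma abs_sub_le_iSup_abs_sub {ι : Type*} [Finite ι] (u v : ι → ℝ) (i : ι) :
    |u i - v i| ≤ ⨆ j, |u j - v j| :=
  le_ciSup (f := fun j => |u j - v j|) (Set.finite_range _).bddAbove i

lemma iSup_abs_update_sub_le {ι : Type*} [Finite ι] [DecidableEq ι] (u v : ι → ℝ) (I : ι)
    {x B : ℝ} (hx : |x - v I| ≤ B) :
    ⨆ i, |update u I x i - v i| ≤ max (⨆ i, |u i - v i|) B := by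
  have : Nonempty ι := ⟨I⟩
  refine ciSup_le fun i => ?_
  rcases eq_or_ne i I with rfl | hi
  · simpa using le_max_of_le_right hx
  · simpa [update_of_ne hi] using le_max_of_le_left (abs_sub_le_iSup_abs_sub u v i)

theorem greenkhorn_update_nonexpansive_general {n : ℕ} (a b : Fin n → ℝ)
    (C : Matrix (Fin n) (Fin n) ℝ) (γ : ℝ) (hγ : 0 < γ)
    (fs gs : Fin n → ℝ)
    (hfs : ∀ i, ∑ j, plan C γ fs gs i j = a i)
    (hgs : ∀ j, ∑ i, plan C γ fs gs i j = b j)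
    (f g f' g' : Fin n → ℝ)
    (hupd : (∃ I : Fin n, g' = g ∧
        f' = Function.update f I (γ * Real.log (a I) -
          γ * Real.log (∑ j, Real.exp (-C I j / γ) * Real.exp (g j / γ)))) ∨
      (∃ J : Fin n, f' = f ∧
        g' = Function.update g J (γ * Real.log (b J) -
          γ * Real.log (∑ i, Real.exp (-C i J / γ) * Real.exp (f i / γ))))) :
    max (⨆ i, |f' i - fs i|) (⨆ j, |g' j - gs j|) ≤
      max (⨆ i, |f i - fs i|) (⨆ j, |g j - gs j|) := by
  rcases hupd with ⟨I, hg', hf'⟩ | ⟨J, hf', hg'⟩ <;> rw [hf', hg']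
  · have : Nonempty (Fin n) := ⟨I⟩
    have hI := abs_sinkhorn_update_sub_le hγ (fun j => exp_pos (-C I j / γ))
      (abs_sub_le_iSup_abs_sub g gs) ((hfs I).symm.trans (plan_row_sum C γ fs gs I))
    exact max_le (iSup_abs_update_sub_le f fs I hI) (le_max_right _ _)
  · have : Nonempty (Fin n) := ⟨J⟩
    have hJ := abs_sinkhorn_update_sub_le hγ (fun i => exp_pos (-C i J / γ))
      (abs_sub_le_iSup_abs_sub f fs) ((hgs J).symm.trans (plan_col_sum C γ fs gs J))
    exact max_le (le_max_left _ _) ((iSup_abs_update_sub_le g gs J hJ).trans_eq (max_comm _ _))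

/-- **Non-expansiveness of a single coordinate update in the sup-norm**
(Lemma 3.1 of Lin–Ho–Jordan): if `(f', g')` is obtained from `(f, g)` by a single
Greenkhorn-type coordinate update, then for any dual optimal solution `(f*, g*)`,
`max(‖f' − f*‖_∞, ‖g' − g*‖_∞) ≤ max(‖f − f*‖_∞, ‖g − g*‖_∞)`. -/
theorem greenkhorn_update_nonexpansive {n : ℕ} (a b : Fin n → ℝ)
    (C : Matrix (Fin n) (Fin n) ℝ) (γ : ℝ) (hγ : 0 < γ)
    (ha0 : ∀ i, 0 < a i) (hb0 : ∀ j, 0 < b j)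
    (ha1 : ∑ i, a i = 1) (hb1 : ∑ j, b j = 1)
    (hC : ∀ i j, 0 ≤ C i j)
    (fs gs : Fin n → ℝ)
    (hfs : ∀ i, ∑ j, plan C γ fs gs i j = a i)
    (hgs : ∀ j, ∑ i, plan C γ fs gs i j = b j)
    (f g f' g' : Fin n → ℝ)
    (hupd : (∃ I : Fin n, g' = g ∧
        f' = Function.update f I (γ * Real.log (a I) -
          γ * Real.log (∑ j, Real.exp (-C I j / γ) * Real.exp (g j / γ)))) ∨
      (∃ J : Fin n, f' = f ∧
        g' = Function.update g J (γ * Real.log (b J) -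
          γ * Real.log (∑ i, Real.exp (-C i J / γ) * Real.exp (f i / γ))))) :
    max (⨆ i, |f' i - fs i|) (⨆ j, |g' j - gs j|) ≤
      max (⨆ i, |f i - fs i|) (⨆ j, |g j - gs j|) :=
  greenkhorn_update_nonexpansive_general a b C γ hγ fs gs hfs hgs f g f' g' hupd
end

section
/- Let a, b ∈ ℝ_{++}ⁿ be strictly positive probability vectors, C ∈ ℝ₊^{n×n}, γ > 0, K := exp(−C/γ). Then there exists a dual optimal solution (f*, g*) ∈ ℝⁿ×ℝⁿ (i.e. diag(e^{f*/γ}) K diag(e^{g*/γ}) has row sums a and column sums b) such that max(‖f* − γ log a‖_∞, ‖g* − γ log b‖_∞) ≤ 2‖C‖_∞. -/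
/-!
A maximizer `f` of the semi-dual `Φ(f) = ⟨a, f⟩ - γ Σⱼ bⱼ log Σᵢ e^{(fᵢ - Cᵢⱼ)/γ}`, paired with
its soft c-transform `g`, has column sums `b` by the choice of `g` and row sums `a` by the
first-order condition `∇Φ(f) = 0`. A maximizer exists because `Φ` is invariant under adding
constants and `Φ(f) ≤ Σᵢ aᵢ (fᵢ - max f) + max C`, so the superlevel sets of `Φ` on `{max f = 0}`
are bounded.

Normalize `Σᵢ e^{fᵢ/γ} = 1` and put `c = ‖C‖_∞`. The column masses `Σᵢ e^{fᵢ/γ} Kᵢⱼ` are then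
means of entries of `K`, which lie in `[e^{-c/γ}, e^{c/γ}]`, so `|g - γ log b| ≤ c`. Hence
`Σⱼ e^{gⱼ/γ}` is a `b`-mean of values in the same interval, the row masses `Σⱼ Kᵢⱼ e^{gⱼ/γ}` lie in
`[e^{-2c/γ}, e^{2c/γ}]`, and `|f - γ log a| ≤ 2c`.
-/

open Finset Real

theorem abs_mul_log_sum_mul_exp_sub_le {ι : Type*} [Fintype ι] {w y : ι → ℝ} {γ c : ℝ}
    (hγ : 0 < γ) (hw : ∀ k, 0 ≤ w k) (hW : 0 < ∑ k, w k) (hy : ∀ k, |y k| ≤ c) :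
    |γ * log (∑ k, w k * exp (y k / γ)) - γ * log (∑ k, w k)| ≤ c := by
  have lower : exp (-c / γ) * ∑ k, w k ≤ ∑ k, w k * exp (y k / γ) := by
    rw [mul_sum]
    refine sum_le_sum fun k _ => ?_
    rw [mul_comm]
    gcongr
    · exact hw k
    · linarith [neg_abs_le (y k), hy k]
  have upper : ∑ k, w k * exp (y k / γ) ≤ exp (c / γ) * ∑ k, w k := by
    rw [mul_sum]
    refine sum_le_sum fun k _ => ?_
    rw [mul_comm (exp _)]
    gcongr
    · exact hw k
    · linarith [le_abs_self (y k), hy k]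
  have hS : 0 < ∑ k, w k * exp (y k / γ) := lt_of_lt_of_le (by positivity) lower
  have hlower := mul_le_mul_of_nonneg_left (log_le_log (by positivity) lower) hγ.le
  have hupper := mul_le_mul_of_nonneg_left (log_le_log hS upper) hγ.le
  rw [log_mul (exp_pos _).ne' hW.ne', log_exp, mul_add, mul_div_cancel₀ _ hγ.ne'] at hlower hupper
  exact abs_sub_le_iff.mpr ⟨by linarith, by linarith⟩

theorem sub_mul_log_eq_of_exp_mul_eq {γ t M x : ℝ} (hγ : γ ≠ 0) (hM : 0 < M)
    (h : exp (t / γ) * M = x) : t - γ * log x = -(γ * log M) := by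
  rw [← h, log_mul (exp_pos _).ne' hM.ne', log_exp]
  field_simp
  ring

section Plan

variable {n : ℕ} (C : Matrix (Fin n) (Fin n) ℝ) (γ : ℝ)

noncomputable def colMass (f : Fin n → ℝ) (j : Fin n) : ℝ :=
  ∑ i, exp (f i / γ) * exp (-C i j / γ)

noncomputable def rowMass (g : Fin n → ℝ) (i : Fin n) : ℝ :=
  ∑ j, exp (g j / γ) * exp (-C i j / γ)

variable {C γ}

theorem colMass_pos (f : Fin n → ℝ) (j : Fin n) : 0 < colMass C γ f j :=
  sum_pos (fun i _ => by positivity) ⟨j, mem_univ j⟩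

theorem rowMass_pos (g : Fin n → ℝ) (i : Fin n) : 0 < rowMass C γ g i :=
  sum_pos (fun j _ => by positivity) ⟨i, mem_univ i⟩

theorem sum_plan_col (f g : Fin n → ℝ) (j : Fin n) :
    ∑ i, plan C γ f g i j = colMass C γ f j * exp (g j / γ) := by
  rw [colMass, sum_mul]
  rfl

theorem sum_plan_row (f g : Fin n → ℝ) (i : Fin n) :
    ∑ j, plan C γ f g i j = exp (f i / γ) * rowMass C γ g i := by
  rw [rowMass, mul_sum]
  exact sum_congr rfl fun j _ => by simp only [plan]; ring

variable {c : ℝ} {a b f g : Fin n → ℝ}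

theorem abs_sub_mul_log_le_of_sum_plan_col (hγ : 0 < γ) (hC : ∀ i j, |C i j| ≤ c)
    (hf : ∑ i, exp (f i / γ) = 1) {j : Fin n}
    (hcol : ∑ i, plan C γ f g i j = b j) : |g j - γ * log (b j)| ≤ c := by
  have hmass := abs_mul_log_sum_mul_exp_sub_le hγ (fun i => (exp_pos (f i / γ)).le)
    (hf ▸ one_pos) (fun i => (abs_neg (C i j)).symm ▸ hC i j)
  rw [hf, log_one, mul_zero, sub_zero] at hmass
  rw [sum_plan_col, mul_comm] at hcol
  rw [sub_mul_log_eq_of_exp_mul_eq hγ.ne' (colMass_pos f j) hcol, abs_neg]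
  exact hmass

theorem abs_sub_mul_log_le_of_sum_plan_row (hγ : 0 < γ) (hC : ∀ i j, |C i j| ≤ c)
    (hf : ∑ i, exp (f i / γ) = 1) (hb : ∀ j, 0 < b j) (hb1 : ∑ j, b j = 1)
    (hcol : ∀ j, ∑ i, plan C γ f g i j = b j) {i : Fin n}
    (hrow : ∑ j, plan C γ f g i j = a i) : |f i - γ * log (a i)| ≤ 2 * c := by
  have hexp_g : ∑ j, b j * exp ((g j - γ * log (b j)) / γ) = ∑ j, exp (g j / γ) := by
    refine sum_congr rfl fun j _ => ?_
    rw [sub_div, mul_div_cancel_left₀ _ hγ.ne', exp_sub, exp_log (hb j)]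
    field_simp [(hb j).ne']
  have hsum_g := abs_mul_log_sum_mul_exp_sub_le hγ (fun j => (hb j).le) (hb1 ▸ one_pos)
    fun j => abs_sub_mul_log_le_of_sum_plan_col hγ hC hf (hcol j)
  rw [hexp_g, hb1, log_one, mul_zero, sub_zero] at hsum_g
  have hmass := abs_mul_log_sum_mul_exp_sub_le hγ (fun j => (exp_pos (g j / γ)).le)
    (sum_pos (fun j _ => exp_pos _) ⟨i, mem_univ i⟩) (fun j => (abs_neg (C i j)).symm ▸ hC i j)
  rw [← rowMass] at hmass
  rw [sum_plan_row] at hrow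
  rw [sub_mul_log_eq_of_exp_mul_eq hγ.ne' (rowMass_pos g i) hrow, abs_neg]
  linarith [abs_sub_abs_le_abs_sub (γ * log (rowMass C γ g i)) (γ * log (∑ j, exp (g j / γ)))]

end Plan

section SemiDual

variable {n : ℕ} (C : Matrix (Fin n) (Fin n) ℝ) (γ : ℝ) (a b : Fin n → ℝ)

noncomputable def semiDual (f : Fin n → ℝ) : ℝ :=
  ∑ i, a i * f i - γ * ∑ j, b j * log (colMass C γ f j)

noncomputable def softCTransform (f : Fin n → ℝ) : Fin n → ℝ :=
  fun j => γ * (log (b j) - log (colMass C γ f j))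

variable {C γ a b} {c : ℝ}

theorem exp_softCTransform_div (hγ : γ ≠ 0) (hb : ∀ j, 0 < b j) (f : Fin n → ℝ) (j : Fin n) :
    exp (softCTransform C γ b f j / γ) = b j / colMass C γ f j := by
  rw [softCTransform, mul_div_cancel_left₀ _ hγ, exp_sub, exp_log (hb j),
    exp_log (colMass_pos f j)]

theorem sum_plan_softCTransform_col (hγ : γ ≠ 0) (hb : ∀ j, 0 < b j) (f : Fin n → ℝ)
    (j : Fin n) : ∑ i, plan C γ f (softCTransform C γ b f) i j = b j := by
  rw [sum_plan_col, exp_softCTransform_div hγ hb, mul_div_cancel₀ _ (colMass_pos f j).ne']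

theorem semiDual_add_const (hγ : γ ≠ 0) (ha1 : ∑ i, a i = 1) (hb1 : ∑ j, b j = 1)
    (f : Fin n → ℝ) (η : ℝ) : semiDual C γ a b (fun i => f i + η) = semiDual C γ a b f := by
  have hmass : ∀ j, colMass C γ (fun i => f i + η) j = exp (η / γ) * colMass C γ f j := by
    intro j
    simp only [colMass, add_div, exp_add, mul_sum]
    exact sum_congr rfl fun i _ => by ring
  simp only [semiDual, hmass, log_mul (exp_pos _).ne' (colMass_pos f _).ne', log_exp, mul_add,
    sum_add_distrib, ← sum_mul, ha1, hb1]
  field_simp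
  ring

theorem semiDual_le (hγ : 0 < γ) (hb : ∀ j, 0 ≤ b j) (ha1 : ∑ i, a i = 1)
    (hb1 : ∑ j, b j = 1) (hC : ∀ i j, C i j ≤ c) (f : Fin n → ℝ) (k : Fin n) :
    semiDual C γ a b f ≤ ∑ i, a i * (f i - f k) + c := by
  have hmass : ∀ j, f k - c ≤ γ * log (colMass C γ f j) := by
    intro j
    have hsingle : exp ((f k - C k j) / γ) ≤ colMass C γ f j := by
      rw [sub_div, sub_eq_add_neg, ← neg_div, exp_add]
      exact single_le_sum (f := fun i => exp (f i / γ) * exp (-C i j / γ))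
        (fun i _ => by positivity) (mem_univ k)
    have := (le_log_iff_exp_le (colMass_pos f j)).mpr hsingle
    rw [div_le_iff₀' hγ] at this
    linarith [hC k j]
  have hsum : f k - c ≤ γ * ∑ j, b j * log (colMass C γ f j) := by
    calc f k - c = ∑ j, b j * (f k - c) := by rw [← sum_mul, hb1, one_mul]
      _ ≤ ∑ j, b j * (γ * log (colMass C γ f j)) :=
        sum_le_sum fun j _ => mul_le_mul_of_nonneg_left (hmass j) (hb j)
      _ = γ * ∑ j, b j * log (colMass C γ f j) := by
        rw [mul_sum]; exact sum_congr rfl fun j _ => by ring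
  have hlin : ∑ i, a i * (f i - f k) = ∑ i, a i * f i - f k := by
    simp only [mul_sub, sum_sub_distrib, ← sum_mul, ha1, one_mul]
  rw [semiDual, hlin]
  linarith

theorem continuous_semiDual : Continuous (semiDual C γ a b) := by
  unfold semiDual
  have : ∀ j, Continuous fun f => log (colMass C γ f j) := fun j =>
    Continuous.log (by unfold colMass; fun_prop) fun f => (colMass_pos f j).ne'
  fun_prop

theorem exists_forall_semiDual_le [Nonempty (Fin n)] (hγ : 0 < γ) (ha : ∀ i, 0 < a i)
    (hb : ∀ j, 0 ≤ b j) (ha1 : ∑ i, a i = 1) (hb1 : ∑ j, b j = 1) :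
    ∃ f, ∀ f', semiDual C γ a b f' ≤ semiDual C γ a b f := by
  obtain ⟨c, hc⟩ := Finite.exists_le fun p : Fin n × Fin n => C p.1 p.2
  set L := semiDual C γ a b 0
  have hLc : L ≤ c := by
    simpa using semiDual_le hγ hb ha1 hb1 (fun i j => hc (i, j)) 0 (Classical.arbitrary _)
  set box : Set (Fin n → ℝ) := Set.univ.pi fun l => Set.Icc ((L - c) / a l) 0
  have hbox : ∀ f k, (∀ i, f i ≤ f k) → L ≤ semiDual C γ a b f → (fun i => f i + -f k) ∈ box := by
    intro f k hk hL l _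
    have hl : ∑ i, a i * (f i - f k) ≤ a l * (f l - f k) := by
      have := single_le_sum (f := fun i => a i * (f k - f i))
        (fun i _ => mul_nonneg (ha i).le (sub_nonneg.mpr (hk i))) (mem_univ l)
      simp only [mul_sub, sum_sub_distrib] at this ⊢
      linarith
    have := semiDual_le hγ hb ha1 hb1 (fun i j => hc (i, j)) f k
    refine ⟨?_, by linarith [hk l]⟩
    rw [div_le_iff₀ (ha l)]
    linarith
  have h0 : (0 : Fin n → ℝ) ∈ box := fun l _ =>
    ⟨div_nonpos_of_nonpos_of_nonneg (by linarith) (ha l).le, le_rfl⟩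
  obtain ⟨f₀, -, hf₀⟩ := (isCompact_univ_pi fun l => isCompact_Icc).exists_isMaxOn ⟨0, h0⟩
    continuous_semiDual.continuousOn
  refine ⟨f₀, fun f => ?_⟩
  obtain ⟨k, hk⟩ := Finite.exists_max f
  rw [← semiDual_add_const hγ.ne' ha1 hb1 f (-f k)]
  by_cases hL : L ≤ semiDual C γ a b f
  · exact hf₀ (hbox f k hk hL)
  · rw [semiDual_add_const hγ.ne' ha1 hb1]
    exact (lt_of_not_ge hL).le.trans (hf₀ h0)

theorem hasDerivAt_colMass_add_smul (f d : Fin n → ℝ) (j : Fin n) :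
    HasDerivAt (fun t : ℝ => colMass C γ (f + t • d) j)
      (∑ i, exp (f i / γ) * exp (-C i j / γ) * (d i / γ)) 0 := by
  refine HasDerivAt.fun_sum fun i _ => ?_
  have hline : HasDerivAt (fun t : ℝ => (f i + t * d i) / γ) (d i / γ) 0 := by
    simpa using (((hasDerivAt_id (0 : ℝ)).mul_const (d i)).const_add (f i)).div_const γ
  simpa [mul_right_comm] using hline.exp.mul_const (exp (-C i j / γ))

theorem hasDerivAt_semiDual_add_smul (hγ : γ ≠ 0) (hb : ∀ j, 0 < b j) (f d : Fin n → ℝ) :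
    HasDerivAt (fun t : ℝ => semiDual C γ a b (f + t • d))
      (∑ i, d i * (a i - ∑ j, plan C γ f (softCTransform C γ b f) i j)) 0 := by
  have hlin : HasDerivAt (fun t : ℝ => ∑ i, a i * (f + t • d) i) (∑ i, a i * d i) 0 :=
    HasDerivAt.fun_sum fun i _ => by
      simpa using (((hasDerivAt_id (0 : ℝ)).mul_const (d i)).const_add (f i)).const_mul (a i)
  have hlog : HasDerivAt (fun t : ℝ => ∑ j, b j * log (colMass C γ (f + t • d) j))
      (∑ j, b j * ((∑ i, exp (f i / γ) * exp (-C i j / γ) * (d i / γ)) / colMass C γ f j)) 0 :=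
    HasDerivAt.fun_sum fun j _ => by
      simpa using ((hasDerivAt_colMass_add_smul f d j).log (colMass_pos _ j).ne').const_mul (b j)
  refine (hlin.sub (hlog.const_mul γ)).congr_deriv ?_
  simp only [plan, exp_softCTransform_div hγ hb, mul_sub, sum_sub_distrib, mul_sum, sum_div]
  rw [sum_comm]
  congr 1
  · exact sum_congr rfl fun i _ => by ring
  · refine sum_congr rfl fun j _ => sum_congr rfl fun i _ => ?_
    field_simp

theorem sum_plan_softCTransform_row_of_forall_le (hγ : γ ≠ 0) (hb : ∀ j, 0 < b j)
    {f : Fin n → ℝ} (hf : ∀ f', semiDual C γ a b f' ≤ semiDual C γ a b f) (i : Fin n) :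
    ∑ j, plan C γ f (softCTransform C γ b f) i j = a i := by
  have hmax : IsLocalMax (fun t : ℝ => semiDual C γ a b (f + t • Pi.single i 1)) 0 :=
    Filter.Eventually.of_forall fun t => by simpa using hf (f + t • Pi.single i 1)
  have := hmax.hasDerivAt_eq_zero (hasDerivAt_semiDual_add_smul hγ hb f (Pi.single i 1))
  simp only [Pi.single_apply, ite_mul, one_mul, zero_mul, sum_ite_eq', mem_univ, if_true] at this
  linarith

theorem exists_forall_semiDual_le_of_sum_exp_eq_one [Nonempty (Fin n)] (hγ : 0 < γ)
    (ha : ∀ i, 0 < a i) (hb : ∀ j, 0 ≤ b j) (ha1 : ∑ i, a i = 1) (hb1 : ∑ j, b j = 1) :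
    ∃ f, (∀ f', semiDual C γ a b f' ≤ semiDual C γ a b f) ∧ ∑ i, exp (f i / γ) = 1 := by
  obtain ⟨f, hf⟩ := exists_forall_semiDual_le hγ ha hb ha1 hb1 (C := C)
  have hS : 0 < ∑ i, exp (f i / γ) := sum_pos (fun i _ => exp_pos _) univ_nonempty
  refine ⟨fun i => f i + -(γ * log (∑ i, exp (f i / γ))), ?_, ?_⟩
  · simpa only [semiDual_add_const hγ.ne' ha1 hb1] using hf
  · simp only [add_div, neg_div, mul_div_cancel_left₀ _ hγ.ne', exp_add, exp_neg, exp_log hS,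
      ← sum_mul]
    exact mul_inv_cancel₀ hS.ne'

end SemiDual

theorem exists_bounded_dual_optimal_general {n : ℕ} (a b : Fin n → ℝ)
    (C : Matrix (Fin n) (Fin n) ℝ) (γ : ℝ) (hγ : 0 < γ)
    (ha0 : ∀ i, 0 < a i) (hb0 : ∀ j, 0 < b j)
    (ha1 : ∑ i, a i = 1) (hb1 : ∑ j, b j = 1) :
    ∃ fs gs : Fin n → ℝ,
      (∀ i, ∑ j, plan C γ fs gs i j = a i) ∧
      (∀ j, ∑ i, plan C γ fs gs i j = b j) ∧
      max (⨆ i, |fs i - γ * Real.log (a i)|) (⨆ j, |gs j - γ * Real.log (b j)|) ≤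
        2 * ⨆ i, ⨆ j, |C i j| := by
  rcases isEmpty_or_nonempty (Fin n) with hn | hn
  · exact ⟨0, 0, isEmptyElim, isEmptyElim, by simp [Real.iSup_of_isEmpty]⟩
  obtain ⟨f, hmax, hnorm⟩ := exists_forall_semiDual_le_of_sum_exp_eq_one (C := C) hγ ha0
    (fun j => (hb0 j).le) ha1 hb1
  have hrow := sum_plan_softCTransform_row_of_forall_le hγ.ne' hb0 hmax
  have hcol := sum_plan_softCTransform_col (C := C) hγ.ne' hb0 f
  set c := ⨆ i, ⨆ j, |C i j|
  have hC : ∀ i j, |C i j| ≤ c := fun i j =>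
    le_ciSup_of_le (Finite.bddAbove_range _) i (le_ciSup (Finite.bddAbove_range fun j => |C i j|) j)
  have hc : 0 ≤ c := Real.iSup_nonneg fun i => Real.iSup_nonneg fun j => abs_nonneg _
  refine ⟨f, softCTransform C γ b f, hrow, hcol, max_le ?_ ?_⟩
  · exact Real.iSup_le (fun i => abs_sub_mul_log_le_of_sum_plan_row hγ hC hnorm hb0 hb1 hcol
      (hrow i)) (by linarith)
  · exact Real.iSup_le (fun j => (abs_sub_mul_log_le_of_sum_plan_col hγ hC hnorm (hcol j)).trans
      (by linarith)) (by linarith)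

/-- **Bounded dual optimal solution** (Lemma 8 of the paper): there exists a dual
optimal solution `(f*, g*)` of the entropic OT dual (i.e. a pair whose plan
`diag(e^{f*/γ}) K diag(e^{g*/γ})` has row sums `a` and column sums `b`) with
`max(‖f* − γ log a‖_∞, ‖g* − γ log b‖_∞) ≤ 2‖C‖_∞`. -/
theorem exists_bounded_dual_optimal {n : ℕ} (a b : Fin n → ℝ)
    (C : Matrix (Fin n) (Fin n) ℝ) (γ : ℝ) (hγ : 0 < γ)
    (ha0 : ∀ i, 0 < a i) (hb0 : ∀ j, 0 < b j)
    (ha1 : ∑ i, a i = 1) (hb1 : ∑ j, b j = 1)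
    (hC : ∀ i j, 0 ≤ C i j) :
    ∃ fs gs : Fin n → ℝ,
      (∀ i, ∑ j, plan C γ fs gs i j = a i) ∧
      (∀ j, ∑ i, plan C γ fs gs i j = b j) ∧
      max (⨆ i, |fs i - γ * Real.log (a i)|) (⨆ j, |gs j - γ * Real.log (b j)|) ≤
        2 * ⨆ i, ⨆ j, |C i j| :=
  exists_bounded_dual_optimal_general a b C γ hγ ha0 hb0 ha1 hb1
end

section
/- Let a, b ∈ ℝ_{++}ⁿ be strictly positive probability vectors, C ∈ ℝ₊^{n×n}, γ > 0, K := exp(−C/γ). Let (f_k, g_k) be the Greenkhorn iterates initialized at (f₀, g₀) = (γ log a, γ log b), with P_k := diag(e^{f_k/γ}) K diag(e^{g_k/γ}): at each step, with I maximizing i ↦ ρ(a_i, (P_k𝟏ₙ)_i) and J maximizing j ↦ ρ(b_j, (P_kᵀ𝟏ₙ)_j), the single coordinate f_I is updated to γ log a_I − γ log(K e^{g_k/γ})_I if ρ(a_I,(P_k𝟏ₙ)_I) > ρ(b_J,(P_kᵀ𝟏ₙ)_J), and otherwise g_J is updated to γ log b_J − γ log(Kᵀ e^{f_k/γ})_J.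 Then for every k ≥ 0 and every dual optimal solution (f*, g*): h(f*, g*) − h(f_k, g_k) ≤ 2‖C‖_∞ (‖a − P_k𝟏ₙ‖₁ + ‖b − P_kᵀ𝟏ₙ‖₁). -/
/-- `(f k, g k)` is the sequence of Greenkhorn iterates (in dual form),
initialized at `(γ log a, γ log b)`.  At step `k`, with `P_k` the current plan,
`I` a maximizer of `i ↦ ρ(a_i, (P_k𝟏)_i)` and `J` a maximizer of
`j ↦ ρ(b_j, (P_kᵀ𝟏)_j)`, the coordinate `f_I` is updated to
`γ log a_I − γ log (K e^{g_k/γ})_I` if `ρ(a_I,(P_k𝟏)_I) > ρ(b_J,(P_kᵀ𝟏)_J)`,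
and otherwise `g_J` is updated to `γ log b_J − γ log (Kᵀ e^{f_k/γ})_J`. -/
def GreenkhornSeq {n : ℕ} (a b : Fin n → ℝ) (C : Matrix (Fin n) (Fin n) ℝ) (γ : ℝ)
    (f g : ℕ → Fin n → ℝ) : Prop :=
  f 0 = (fun i => γ * Real.log (a i)) ∧
  g 0 = (fun j => γ * Real.log (b j)) ∧
  ∀ k : ℕ, ∃ I J : Fin n,
    (∀ i, rho (a i) (∑ j, plan C γ (f k) (g k) i j) ≤
      rho (a I) (∑ j, plan C γ (f k) (g k) I j)) ∧
    (∀ j, rho (b j) (∑ i, plan C γ (f k) (g k) i j) ≤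
      rho (b J) (∑ i, plan C γ (f k) (g k) i J)) ∧
    (rho (b J) (∑ i, plan C γ (f k) (g k) i J) <
        rho (a I) (∑ j, plan C γ (f k) (g k) I j) →
      f (k+1) = Function.update (f k) I (γ * Real.log (a I) -
          γ * Real.log (∑ j, Real.exp (-C I j / γ) * Real.exp (g k j / γ))) ∧
      g (k+1) = g k) ∧
    (¬ (rho (b J) (∑ i, plan C γ (f k) (g k) i J) <
        rho (a I) (∑ j, plan C γ (f k) (g k) I j)) →
      f (k+1) = f k ∧
      g (k+1) = Function.update (g k) J (γ * Real.log (b J) -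
          γ * Real.log (∑ i, Real.exp (-C i J / γ) * Real.exp (f k i / γ))))


/-!
The dual objective is concave with gradient `(a − P𝟏, b − Pᵀ𝟏)` at `(f, g)`, so the gap at
`(f_k, g_k)` is at most `⟨f* − f_k, a − P_k𝟏⟩ + ⟨g* − g_k, b − P_kᵀ𝟏⟩`, and it suffices to find a
dual optimum within `2‖C‖_∞` of `(f_k, g_k)` in every coordinate. Dual optima can be shifted to
`(f* + t, g* − t)`; choosing `t` with `logSumExp γ g* = 0` puts them within `2‖C‖_∞` of
`(γ log a, γ log b)`. A Greenkhorn update sets `f_I = γ log a_I − logSumExp γ (g − C_I·)`, the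
identity that `f*_I` satisfies, and `logSumExp γ` is 1-Lipschitz for the sup norm, so the bound
survives every update, whichever coordinate is chosen.
-/

open Finset Real
open scoped Matrix

noncomputable def logSumExp {ι : Type*} [Fintype ι] (γ : ℝ) (x : ι → ℝ) : ℝ :=
  γ * Real.log (∑ j, Real.exp (x j / γ))

section LogSumExp

variable {ι κ : Type*} [Fintype ι] [Nonempty ι] [Fintype κ] [Nonempty κ] {γ : ℝ}

lemma sum_exp_div_pos (x : ι → ℝ) : 0 < ∑ j, Real.exp (x j / γ) :=
  sum_pos (fun _ _ => exp_pos _) univ_nonempty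

lemma logSumExp_add_const (hγ : γ ≠ 0) (x : ι → ℝ) (c : ℝ) :
    logSumExp γ (fun j => x j + c) = logSumExp γ x + c := by
  have hsum : ∑ j, Real.exp ((x j + c) / γ) = Real.exp (c / γ) * ∑ j, Real.exp (x j / γ) := by
    rw [mul_sum]
    exact sum_congr rfl fun j _ => by rw [← exp_add, add_div, add_comm]
  rw [logSumExp, logSumExp, hsum, log_mul (exp_ne_zero _) (sum_exp_div_pos x).ne', log_exp]
  field_simp
  ring

lemma logSumExp_mono (hγ : 0 < γ) {x y : ι → ℝ} (h : x ≤ y) :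
    logSumExp γ x ≤ logSumExp γ y := by
  refine mul_le_mul_of_nonneg_left (log_le_log (sum_exp_div_pos x) ?_) hγ.le
  exact sum_le_sum fun j _ => exp_le_exp.2 (div_le_div_of_nonneg_right (h j) hγ.le)

lemma abs_logSumExp_sub_le (hγ : 0 < γ) {x y : ι → ℝ} {R : ℝ} (h : ∀ j, |x j - y j| ≤ R) :
    |logSumExp γ x - logSumExp γ y| ≤ R := by
  have bound : ∀ x y : ι → ℝ, (∀ j, |x j - y j| ≤ R) → logSumExp γ x ≤ logSumExp γ y + R :=
    fun x y h => by
      rw [← logSumExp_add_const hγ.ne']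
      exact logSumExp_mono hγ fun j => by linarith [(abs_le.1 (h j)).2]
  have h' : ∀ j, |y j - x j| ≤ R := fun j => abs_sub_comm (x j) (y j) ▸ h j
  exact abs_sub_le_iff.2 ⟨by linarith [bound x y h], by linarith [bound y x h']⟩

lemma logSumExp_prod_add (x : ι → ℝ) (y : κ → ℝ) :
    logSumExp γ (fun p : ι × κ => x p.1 + y p.2) = logSumExp γ x + logSumExp γ y := by
  have hsum : ∑ p : ι × κ, Real.exp ((x p.1 + y p.2) / γ) =
      (∑ i, Real.exp (x i / γ)) * ∑ j, Real.exp (y j / γ) := by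
    rw [Fintype.sum_prod_type, sum_mul_sum]
    simp only [add_div, exp_add]
  rw [logSumExp, logSumExp, logSumExp, hsum,
    log_mul (sum_exp_div_pos x).ne' (sum_exp_div_pos y).ne', mul_add]

end LogSumExp

lemma mul_sub_le_exp_sub_exp (s s' : ℝ) : Real.exp s * (s' - s) ≤ Real.exp s' - Real.exp s := by
  have h := mul_le_mul_of_nonneg_left (add_one_le_exp (s' - s)) (exp_pos s).le
  rw [← exp_add, add_sub_cancel] at h
  linarith

lemma sum_mul_le_mul_sum_abs {ι : Type*} [Fintype ι] {u : ι → ℝ} {R : ℝ} (hu : ∀ i, |u i| ≤ R)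
    (v : ι → ℝ) : ∑ i, u i * v i ≤ R * ∑ i, |v i| := by
  rw [mul_sum]
  refine sum_le_sum fun i _ => (le_abs_self _).trans ?_
  rw [abs_mul]
  exact mul_le_mul_of_nonneg_right (hu i) (abs_nonneg _)

lemma Matrix.abs_apply_le_iSup_iSup_abs {m n : Type*} [Finite m] [Finite n] (C : Matrix m n ℝ)
    (i : m) (j : n) : |C i j| ≤ ⨆ i, ⨆ j, |C i j| :=
  (le_ciSup (Finite.bddAbove_range _) j).trans
    (le_ciSup (f := fun i => ⨆ j, |C i j|) (Finite.bddAbove_range _) i)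

section Plan

variable {n : ℕ} {a b : Fin n → ℝ} {C : Matrix (Fin n) (Fin n) ℝ} {γ : ℝ}

lemma plan_apply (C : Matrix (Fin n) (Fin n) ℝ) (γ : ℝ) (f g : Fin n → ℝ) (i j : Fin n) :
    plan C γ f g i j = Real.exp ((f i + g j - C i j) / γ) := by
  rw [plan, ← exp_add, ← exp_add]
  ring_nf

lemma plan_transpose_apply (f g : Fin n → ℝ) (i j : Fin n) :
    plan Cᵀ γ g f j i = plan C γ f g i j := by
  simp only [plan, Matrix.transpose_apply]
  ring

lemma plan_add_const_sub_const (f g : Fin n → ℝ) (t : ℝ) :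
    plan C γ (fun i => f i + t) (fun j => g j - t) = plan C γ f g := by
  ext i j
  simp only [plan_apply]
  ring_nf

lemma sum_eq_sum_of_plan {f g : Fin n → ℝ} (hf : ∀ i, ∑ j, plan C γ f g i j = a i)
    (hg : ∀ j, ∑ i, plan C γ f g i j = b j) : ∑ i, a i = ∑ j, b j := by
  simp only [← hf, ← hg]
  exact sum_comm

lemma gamma_log_sum_plan (hγ : γ ≠ 0) [Nonempty (Fin n)] (f g : Fin n → ℝ) (i : Fin n) :
    γ * Real.log (∑ j, plan C γ f g i j) = f i + logSumExp γ (fun j => g j - C i j) := by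
  have hsum : ∑ j, plan C γ f g i j = Real.exp (f i / γ) * ∑ j, Real.exp ((g j - C i j) / γ) := by
    rw [mul_sum]
    exact sum_congr rfl fun j _ => by rw [plan_apply, ← exp_add]; ring_nf
  rw [hsum, log_mul (exp_ne_zero _) (sum_exp_div_pos _).ne', log_exp, mul_add, logSumExp]
  field_simp

lemma eq_log_sub_logSumExp_of_sum_plan (hγ : γ ≠ 0) [Nonempty (Fin n)] {f g : Fin n → ℝ}
    {i : Fin n} {r : ℝ} (h : ∑ j, plan C γ f g i j = r) :
    f i = γ * Real.log r - logSumExp γ (fun j => g j - C i j) := by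
  rw [← h, gamma_log_sum_plan hγ]
  ring

lemma abs_logSumExp_add_logSumExp_le (hγ : 0 < γ) [Nonempty (Fin n)] {E : ℝ}
    (hC : ∀ i j, |C i j| ≤ E) {f g : Fin n → ℝ} (hmass : ∑ i, ∑ j, plan C γ f g i j = 1) :
    |logSumExp γ f + logSumExp γ g| ≤ E := by
  have hzero : logSumExp γ (fun p : Fin n × Fin n => f p.1 + g p.2 - C p.1 p.2) = 0 := by
    rw [logSumExp, Fintype.sum_prod_type]
    simp only [← plan_apply, hmass, log_one, mul_zero]
  rw [← logSumExp_prod_add, ← sub_zero (logSumExp γ _), ← hzero]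
  exact abs_logSumExp_sub_le hγ fun p => by simpa using hC p.1 p.2

lemma dualObj_add_const_sub_const (hab : ∑ i, a i = ∑ j, b j) (f g : Fin n → ℝ) (t : ℝ) :
    dualObj a b C γ (fun i => f i + t) (fun j => g j - t) = dualObj a b C γ f g := by
  have hexp : ∀ i j, Real.exp ((f i + t + (g j - t) - C i j) / γ) =
      Real.exp ((f i + g j - C i j) / γ) := fun i j => by ring_nf
  simp only [dualObj, hexp, add_mul, sub_mul, sum_add_distrib, sum_sub_distrib, ← mul_sum, hab]
  ring

lemma dualObj_sub_le (hγ : 0 < γ) (f g f' g' : Fin n → ℝ) :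
    dualObj a b C γ f' g' - dualObj a b C γ f g ≤
      ∑ i, (f' i - f i) * (a i - ∑ j, plan C γ f g i j) +
        ∑ j, (g' j - g j) * (b j - ∑ i, plan C γ f g i j) := by
  have hterm : ∀ i j, plan C γ f g i j * ((f' i - f i) + (g' j - g j)) ≤
      γ * (plan C γ f' g' i j - plan C γ f g i j) := fun i j => by
    have h := mul_le_mul_of_nonneg_left
      (mul_sub_le_exp_sub_exp ((f i + g j - C i j) / γ) ((f' i + g' j - C i j) / γ)) hγ.le
    rw [← plan_apply, ← plan_apply] at h
    refine le_of_eq_of_le ?_ h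
    field_simp
    ring
  have hsplit : ∑ i, ∑ j, plan C γ f g i j * ((f' i - f i) + (g' j - g j)) =
      ∑ i, (f' i - f i) * ∑ j, plan C γ f g i j + ∑ j, (g' j - g j) * ∑ i, plan C γ f g i j := by
    simp only [mul_add, sum_add_distrib, mul_sum]
    rw [sum_comm (f := fun i j => plan C γ f g i j * (g' j - g j))]
    simp only [mul_comm]
  have hsum := sum_le_sum fun i (_ : i ∈ univ) => sum_le_sum fun j (_ : j ∈ univ) => hterm i j
  rw [hsplit] at hsum
  simp only [dualObj, ← plan_apply, ← mul_sum, mul_sub, sub_mul, sum_sub_distrib] at hsum ⊢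
  linarith

end Plan

section Greenkhorn

variable {n : ℕ} {a b : Fin n → ℝ} {C : Matrix (Fin n) (Fin n) ℝ} {γ : ℝ}

/-- With `Cᵀ`, `b` and `(g, f)` in place of `C`, `a` and `(f, g)`, this is also the column update of
`GreenkhornSeq`, definitionally. -/
noncomputable def coordUpdate (a : Fin n → ℝ) (C : Matrix (Fin n) (Fin n) ℝ) (γ : ℝ)
    (f g : Fin n → ℝ) (I : Fin n) : Fin n → ℝ :=
  Function.update f I
    (γ * Real.log (a I) - γ * Real.log (∑ j, Real.exp (-C I j / γ) * Real.exp (g j / γ)))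

lemma coordUpdate_self (f g : Fin n → ℝ) (I : Fin n) :
    coordUpdate a C γ f g I I = γ * Real.log (a I) - logSumExp γ (fun j => g j - C I j) := by
  have hexp : ∀ j, Real.exp (-C I j / γ) * Real.exp (g j / γ) = Real.exp ((g j - C I j) / γ) :=
    fun j => by rw [← exp_add]; ring_nf
  rw [coordUpdate, Function.update_self, logSumExp]
  simp only [hexp]

lemma abs_sub_coordUpdate_le (hγ : 0 < γ) {fs gs f g : Fin n → ℝ} {R : ℝ}
    (hfs : ∀ i, ∑ j, plan C γ fs gs i j = a i)
    (hf : ∀ i, |fs i - f i| ≤ R) (hg : ∀ j, |gs j - g j| ≤ R) (I i : Fin n) :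
    |fs i - coordUpdate a C γ f g I i| ≤ R := by
  have : Nonempty (Fin n) := ⟨I⟩
  rcases eq_or_ne i I with rfl | hne
  · rw [coordUpdate_self, eq_log_sub_logSumExp_of_sum_plan hγ.ne' (hfs i), sub_sub_sub_cancel_left]
    exact abs_logSumExp_sub_le hγ fun j => by simpa [abs_sub_comm] using hg j
  · rw [coordUpdate, Function.update_of_ne hne]
    exact hf i

lemma GreenkhornSeq.abs_sub_le {f g : ℕ → Fin n → ℝ} (hiter : GreenkhornSeq a b C γ f g)
    (hγ : 0 < γ) {fs gs : Fin n → ℝ} {R : ℝ}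
    (hfs : ∀ i, ∑ j, plan C γ fs gs i j = a i) (hgs : ∀ j, ∑ i, plan C γ fs gs i j = b j)
    (hf₀ : ∀ i, |fs i - γ * Real.log (a i)| ≤ R) (hg₀ : ∀ j, |gs j - γ * Real.log (b j)| ≤ R)
    (m : ℕ) : (∀ i, |fs i - f m i| ≤ R) ∧ ∀ j, |gs j - g m j| ≤ R := by
  induction m with
  | zero => rw [hiter.1, hiter.2.1]; exact ⟨hf₀, hg₀⟩
  | succ m ih =>
    have hgs' : ∀ j, ∑ i, plan Cᵀ γ gs fs j i = b j := by
      simpa only [plan_transpose_apply] using hgs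
    obtain ⟨I, J, -, -, hrow, hcol⟩ := hiter.2.2 m
    rcases (em _).imp hrow hcol with ⟨hf, hg⟩ | ⟨hf, hg⟩ <;> rw [hf, hg]
    · exact ⟨abs_sub_coordUpdate_le hγ hfs ih.1 ih.2 I, ih.2⟩
    · exact ⟨ih.1, abs_sub_coordUpdate_le (C := Cᵀ) hγ hgs' ih.2 ih.1 J⟩

end Greenkhorn

section DualOptimum

variable {n : ℕ} {a b : Fin n → ℝ} {C : Matrix (Fin n) (Fin n) ℝ} {γ : ℝ}

lemma abs_sub_gamma_log_le_of_logSumExp_eq_zero (hγ : 0 < γ) [Nonempty (Fin n)] {E : ℝ}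
    (hC : ∀ i j, |C i j| ≤ E) {fs gs : Fin n → ℝ} (hfs : ∀ i, ∑ j, plan C γ fs gs i j = a i)
    (hgs : ∀ j, ∑ i, plan C γ fs gs i j = b j) (ha : ∑ i, a i = 1) (hgs₀ : logSumExp γ gs = 0) :
    (∀ i, |fs i - γ * Real.log (a i)| ≤ E) ∧ ∀ j, |gs j - γ * Real.log (b j)| ≤ 2 * E := by
  have hfs₀ : |logSumExp γ fs| ≤ E := by
    have hmass : ∑ i, ∑ j, plan C γ fs gs i j = 1 := (sum_congr rfl fun i _ => hfs i).trans ha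
    simpa [hgs₀] using abs_logSumExp_add_logSumExp_le hγ hC hmass
  have hgs' : ∀ j, ∑ i, plan Cᵀ γ gs fs j i = b j := by
    simpa only [plan_transpose_apply] using hgs
  refine ⟨fun i => ?_, fun j => ?_⟩
  · rw [eq_log_sub_logSumExp_of_sum_plan hγ.ne' (hfs i), sub_sub_cancel_left, abs_neg,
      ← sub_zero (logSumExp γ _), ← hgs₀]
    exact abs_logSumExp_sub_le hγ fun j => by simpa using hC i j
  · rw [eq_log_sub_logSumExp_of_sum_plan hγ.ne' (hgs' j), sub_sub_cancel_left, abs_neg]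
    have hcol := abs_logSumExp_sub_le hγ (x := fun i => fs i - Cᵀ j i) (y := fs) (R := E)
      fun i => by simpa using hC i j
    linarith [abs_sub_abs_le_abs_sub (logSumExp γ fun i => fs i - Cᵀ j i) (logSumExp γ fs)]

lemma exists_dual_optimum_near_gamma_log (hγ : 0 < γ) {E : ℝ} (hC : ∀ i j, |C i j| ≤ E)
    {fs gs : Fin n → ℝ} (hfs : ∀ i, ∑ j, plan C γ fs gs i j = a i)
    (hgs : ∀ j, ∑ i, plan C γ fs gs i j = b j) (ha : ∑ i, a i = 1) :
    ∃ fs' gs' : Fin n → ℝ, plan C γ fs' gs' = plan C γ fs gs ∧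
      dualObj a b C γ fs' gs' = dualObj a b C γ fs gs ∧
      (∀ i, |fs' i - γ * Real.log (a i)| ≤ 2 * E) ∧ ∀ j, |gs' j - γ * Real.log (b j)| ≤ 2 * E := by
  obtain ⟨i₀⟩ : Nonempty (Fin n) :=
    univ_nonempty_iff.1 (nonempty_of_sum_ne_zero (ha ▸ one_ne_zero))
  have : Nonempty (Fin n) := ⟨i₀⟩
  have hplan := plan_add_const_sub_const (C := C) (γ := γ) fs gs (logSumExp γ gs)
  have hgs₀ : logSumExp γ (fun j => gs j - logSumExp γ gs) = 0 := by
    simp only [sub_eq_add_neg]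
    rw [logSumExp_add_const hγ.ne' gs, add_neg_cancel]
  obtain ⟨hf₀, hg₀⟩ := abs_sub_gamma_log_le_of_logSumExp_eq_zero hγ hC (hplan ▸ hfs) (hplan ▸ hgs)
    ha hgs₀
  have hE : 0 ≤ E := (abs_nonneg _).trans (hC i₀ i₀)
  exact ⟨_, _, hplan, dualObj_add_const_sub_const (sum_eq_sum_of_plan hfs hgs) fs gs _,
    fun i => (hf₀ i).trans (by linarith), hg₀⟩

end DualOptimum

theorem greenkhorn_dual_gap_bound_general {n : ℕ} (a b : Fin n → ℝ)
    (C : Matrix (Fin n) (Fin n) ℝ) (γ : ℝ) (hγ : 0 < γ)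
    (ha1 : ∑ i, a i = 1)
    (f g : ℕ → Fin n → ℝ) (hiter : GreenkhornSeq a b C γ f g) :
    ∀ k : ℕ, ∀ fs gs : Fin n → ℝ,
      (∀ i, ∑ j, plan C γ fs gs i j = a i) →
      (∀ j, ∑ i, plan C γ fs gs i j = b j) →
      dualObj a b C γ fs gs - dualObj a b C γ (f k) (g k) ≤
        2 * (⨆ i, ⨆ j, |C i j|) *
          ((∑ i, |a i - ∑ j, plan C γ (f k) (g k) i j|) +
            (∑ j, |b j - ∑ i, plan C γ (f k) (g k) i j|)) := by
  intro k fs gs hfs hgs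
  obtain ⟨fs', gs', hplan, hobj, hf₀, hg₀⟩ := exists_dual_optimum_near_gamma_log hγ
    (Matrix.abs_apply_le_iSup_iSup_abs C) hfs hgs ha1
  rw [← hplan] at hfs hgs
  obtain ⟨hfk, hgk⟩ := hiter.abs_sub_le hγ hfs hgs hf₀ hg₀ k
  rw [← hobj, mul_add]
  exact (dualObj_sub_le hγ _ _ _ _).trans
    (add_le_add (sum_mul_le_mul_sum_abs hfk _) (sum_mul_le_mul_sum_abs hgk _))

/-- **Dual gap bound for Greenkhorn** (Lemma of the paper): for Greenkhorn iterates
initialized at `(γ log a, γ log b)`, for every `k` and every dual optimal solution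
`(f*, g*)`, `h(f*,g*) − h(f_k,g_k) ≤ 2‖C‖_∞ (‖a − P_k𝟏‖₁ + ‖b − P_kᵀ𝟏‖₁)`. -/
theorem greenkhorn_dual_gap_bound {n : ℕ} (a b : Fin n → ℝ)
    (C : Matrix (Fin n) (Fin n) ℝ) (γ : ℝ) (hγ : 0 < γ)
    (ha0 : ∀ i, 0 < a i) (hb0 : ∀ j, 0 < b j)
    (ha1 : ∑ i, a i = 1) (hb1 : ∑ j, b j = 1)
    (hC : ∀ i j, 0 ≤ C i j)
    (f g : ℕ → Fin n → ℝ) (hiter : GreenkhornSeq a b C γ f g) :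
    ∀ k : ℕ, ∀ fs gs : Fin n → ℝ,
      (∀ i, ∑ j, plan C γ fs gs i j = a i) →
      (∀ j, ∑ i, plan C γ fs gs i j = b j) →
      dualObj a b C γ fs gs - dualObj a b C γ (f k) (g k) ≤
        2 * (⨆ i, ⨆ j, |C i j|) *
          ((∑ i, |a i - ∑ j, plan C γ (f k) (g k) i j|) +
            (∑ j, |b j - ∑ i, plan C γ (f k) (g k) i j|)) :=
  greenkhorn_dual_gap_bound_general a b C γ hγ ha1 f g hiter
end
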